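/- arXiv:1411.6182 — 3 statements merged into one kernel-verified Lean document; each statement's English description precedes it below -/
import Mathlib

section
/- Let κ < 0 and λ > 0, and let u be a solution of problem (P) for parameters (κ, λ) with u(x) > 0 for all x ∈ (0,1). Set u₀ := u(1/2). Then the time-map identity √(−κ) · ∫₀¹ u₀ / √(1 − (1 − (λκ/2)·u₀²·(1 − θ²))⁻²) dθ = 1/2 holds; that is, J(λ, u₀) = 1/2. -/
open Set Real Filter

noncomputable section

/-- `u` is twice continuously differentiable on `[a,b]`, satisfies
`1 + κ (u')² > 0` and the ODE `-u'' = λ u (1 + κ (u')²)^(3/2)` on `[a,b]`. -/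
def SolODE (κ lam : ℝ) (u : ℝ → ℝ) (a b : ℝ) : Prop :=
  (∀ x ∈ Set.Icc a b, DifferentiableAt ℝ u x) ∧
  (∀ x ∈ Set.Icc a b, DifferentiableAt ℝ (deriv u) x) ∧
  ContinuousOn (deriv (deriv u)) (Set.Icc a b) ∧
  (∀ x ∈ Set.Icc a b, 0 < 1 + κ * (deriv u x) ^ 2) ∧
  (∀ x ∈ Set.Icc a b,
    -(deriv (deriv u) x) = lam * u x * (1 + κ * (deriv u x) ^ 2) ^ ((3 : ℝ) / 2))

/-- `u` is a solution of problem (P) on `[0,1]` with Dirichlet boundary conditions. -/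
def SolP (κ lam : ℝ) (u : ℝ → ℝ) : Prop :=
  SolODE κ lam u 0 1 ∧ u 0 = 0 ∧ u 1 = 0

/-- `u` is an `S⁺ₙ`-solution of problem (P): a nontrivial solution with exactly
`n - 1` zeros in `(0,1)`, all zeros in `[0,1]` simple, and positive near `0`. -/
def SPlus (κ lam : ℝ) (n : ℕ) (u : ℝ → ℝ) : Prop :=
  SolP κ lam u ∧
  (∃ x ∈ Set.Icc (0 : ℝ) 1, u x ≠ 0) ∧
  {x ∈ Set.Ioo (0 : ℝ) 1 | u x = 0}.ncard = n - 1 ∧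
  (∀ τ ∈ Set.Icc (0 : ℝ) 1, u τ = 0 → deriv u τ ≠ 0) ∧
  (∃ δ > 0, ∀ x ∈ Set.Ioo (0 : ℝ) δ, 0 < u x)

/-- The constant `B = ∫₀¹ dθ/√(θ⁻⁴ - 1)`. -/
def Bconst : ℝ := ∫ θ in (0 : ℝ)..1, 1 / Real.sqrt ((θ ^ 4)⁻¹ - 1)

/-- The sup-norm of `u` over `[0,1]`. -/
def supNorm (u : ℝ → ℝ) : ℝ := sSup ((fun x => |u x|) '' Set.Icc (0 : ℝ) 1)

/-- The time map `J(λ, ξ) = √(-κ) ∫₀¹ ξ/√(1 - (1 - λκξ²(1-θ²)/2)⁻²) dθ`. -/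
def Jmap (κ lam ξ : ℝ) : ℝ :=
  Real.sqrt (-κ) *
    ∫ θ in (0 : ℝ)..1,
      ξ / Real.sqrt (1 - ((1 - lam * κ / 2 * ξ ^ 2 * (1 - θ ^ 2))⁻¹) ^ 2)

/-!
Along a solution the energy `-κ⁻¹ (1 + κ u'²)^(-1/2) + λ u² / 2` is conserved. Evaluating it at
an interior critical point `x₀` of `u`, with `M = u x₀`, gives
`(1 + κ u'²)^(-1/2) = 1 - (λκ/2)(M² - u²)`, so `|u'|` is a function of `u` alone, and `√(-κ)`
times the integrand of `J(λ, M)` at `θ = u / M` is `M / |u'|`. Hence the time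
`T x = √(-κ) ∫₀^{u x / M} … dθ` needed to climb to level `u x` has derivative `u' / |u'| = ±1`.
Since `u'' < 0`, `u'` changes sign only at `x₀`, so `T x₀ - T 0 = x₀` and `T 1 - T x₀ = x₀ - 1`;
with `T 0 = T 1 = 0` and `T x₀ = J(λ, M)` this forces `x₀ = 1/2` and `J(λ, u (1/2)) = 1/2`.
The integrand has an inverse square root singularity at `θ = 1`, hence is integrable.
-/

open MeasureTheory intervalIntegral

theorem sub_eq_mul_sub_of_hasDerivAt_const {f : ℝ → ℝ} {a b c : ℝ} (hab : a ≤ b)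
    (hf : ContinuousOn f (Icc a b)) (hderiv : ∀ x ∈ Ioo a b, HasDerivAt f c x) :
    f b - f a = c * (b - a) := by
  rw [← integral_eq_sub_of_hasDerivAt_of_le hab hf hderiv intervalIntegrable_const,
    intervalIntegral.integral_const, smul_eq_mul, mul_comm]

theorem nonneg_on_Icc_of_pos_on_Ioo {f : ℝ → ℝ} {a b : ℝ} (ha : 0 ≤ f a) (hb : 0 ≤ f b)
    (hpos : ∀ x ∈ Ioo a b, 0 < f x) : ∀ x ∈ Icc a b, 0 ≤ f x := by
  rintro x ⟨hax, hxb⟩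
  rcases hax.eq_or_lt with rfl | hax
  · exact ha
  rcases hxb.eq_or_lt with rfl | hxb
  · exact hb
  exact (hpos x ⟨hax, hxb⟩).le

def timeMapIntegrand (b M θ : ℝ) : ℝ :=
  M / √(1 - ((1 - b * M ^ 2 * (1 - θ ^ 2))⁻¹) ^ 2)

theorem Jmap_eq_integral_timeMapIntegrand (κ lam ξ : ℝ) :
    Jmap κ lam ξ = √(-κ) * ∫ θ in (0 : ℝ)..1, timeMapIntegrand (lam * κ / 2) ξ θ :=
  rfl

section TimeMapIntegrand

variable {b M θ : ℝ}

theorem one_lt_one_sub_mul_sq_mul (hb : b < 0) (hM : M ≠ 0) (hθ : θ ∈ Ioo (-1) 1) :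
    1 < 1 - b * M ^ 2 * (1 - θ ^ 2) := by
  have : 0 < -b * M ^ 2 * (1 - θ ^ 2) :=
    mul_pos (mul_pos (neg_pos.2 hb) (by positivity)) (by nlinarith [hθ.1, hθ.2])
  linarith

theorem continuousOn_timeMapIntegrand (hb : b < 0) (hM : M ≠ 0) :
    ContinuousOn (timeMapIntegrand b M) (Ioo (-1) 1) := by
  intro θ hθ
  have hQ := one_lt_one_sub_mul_sq_mul hb hM hθ
  have hD : 0 < 1 - ((1 - b * M ^ 2 * (1 - θ ^ 2))⁻¹) ^ 2 :=
    sub_pos.2 (pow_lt_one₀ (inv_nonneg.2 (by linarith)) (inv_lt_one_of_one_lt₀ hQ) two_ne_zero)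
  refine ContinuousAt.continuousWithinAt ?_
  unfold timeMapIntegrand
  have : (1 - b * M ^ 2 * (1 - θ ^ 2)) ≠ 0 := by linarith
  have : √(1 - ((1 - b * M ^ 2 * (1 - θ ^ 2))⁻¹) ^ 2) ≠ 0 := (Real.sqrt_pos.2 hD).ne'
  fun_prop (disch := assumption)

theorem timeMapIntegrand_le (hb : b < 0) (hM : 0 < M) (hθ : θ ∈ Icc 0 1) :
    timeMapIntegrand b M θ ≤
      M * (1 - b * M ^ 2) / √(-b * M ^ 2) * (1 - θ) ^ (-(1 / 2) : ℝ) := by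
  rcases hθ.2.eq_or_lt with rfl | hθ1
  · simp [timeMapIntegrand, Real.zero_rpow]
  set c := -b * M ^ 2
  set Q := 1 - b * M ^ 2 * (1 - θ ^ 2)
  have hc : 0 < c := mul_pos (neg_pos.2 hb) (by positivity)
  have hθc : 0 ≤ c * (1 - θ) := mul_nonneg hc.le (by linarith)
  have hQ1 : c * (1 - θ) ≤ Q - 1 := by
    have : Q - 1 - c * (1 - θ) = c * (1 - θ) * θ := by ring
    nlinarith [mul_nonneg hθc hθ.1]
  have hQc : Q ≤ 1 + c := by
    have : 1 + c - Q = c * θ ^ 2 := by ring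
    nlinarith [mul_nonneg hc.le (sq_nonneg θ)]
  have hQ : 0 < Q := by linarith
  have hD : c * (1 - θ) / (1 + c) ^ 2 ≤ 1 - (Q⁻¹) ^ 2 := by
    calc c * (1 - θ) / (1 + c) ^ 2 ≤ (Q ^ 2 - 1) / Q ^ 2 :=
          div_le_div₀ (by nlinarith) (by nlinarith) (by positivity) (by gcongr)
      _ = 1 - (Q⁻¹) ^ 2 := by field_simp
  have hsqrt : √(c * (1 - θ) / (1 + c) ^ 2) = √c * √(1 - θ) / (1 + c) := by
    rw [Real.sqrt_div' _ (by positivity), Real.sqrt_sq (by positivity),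
      Real.sqrt_mul hc.le]
  have hrpow : (1 - θ) ^ (-(1 / 2) : ℝ) = (√(1 - θ))⁻¹ := by
    rw [Real.rpow_neg (by linarith), Real.sqrt_eq_rpow]
  have h1θ : 0 < √(1 - θ) := Real.sqrt_pos.2 (by linarith)
  calc timeMapIntegrand b M θ ≤ M / √(c * (1 - θ) / (1 + c) ^ 2) :=
        div_le_div_of_nonneg_left hM.le (by rw [hsqrt]; positivity) (Real.sqrt_le_sqrt hD)
    _ = _ := by
        rw [hsqrt, hrpow]
        have : 0 < √c := Real.sqrt_pos.2 hc
        field_simp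
        ring

theorem intervalIntegrable_timeMapIntegrand (hb : b < 0) (hM : 0 < M) :
    IntervalIntegrable (timeMapIntegrand b M) volume 0 1 := by
  have hdom : IntervalIntegrable
      (fun θ => M * (1 - b * M ^ 2) / √(-b * M ^ 2) * (1 - θ) ^ (-(1 / 2) : ℝ)) volume 0 1 := by
    have := ((intervalIntegrable_rpow' (r := -(1 / 2)) (by norm_num)).comp_sub_left 1
      (a := 1) (b := 0)).const_mul (M * (1 - b * M ^ 2) / √(-b * M ^ 2))
    simpa using this
  have hmeas : Measurable (timeMapIntegrand b M) := by unfold timeMapIntegrand; fun_prop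
  refine hdom.mono_fun' hmeas.aestronglyMeasurable ?_
  refine ae_restrict_of_forall_mem measurableSet_uIoc fun θ hθ => ?_
  rw [uIoc_of_le zero_le_one] at hθ
  show ‖_‖ ≤ _
  rw [Real.norm_of_nonneg (by unfold timeMapIntegrand; positivity)]
  exact timeMapIntegrand_le hb hM (Ioc_subset_Icc_self hθ)

theorem continuousOn_primitive_timeMapIntegrand (hb : b < 0) (hM : 0 < M) :
    ContinuousOn (fun t => ∫ θ in (0 : ℝ)..t, timeMapIntegrand b M θ) (Icc 0 1) := by
  simpa only [uIcc_of_le zero_le_one] using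
    continuousOn_primitive_interval' (intervalIntegrable_timeMapIntegrand hb hM) left_mem_uIcc

theorem hasDerivAt_primitive_timeMapIntegrand (hb : b < 0) (hM : M ≠ 0) (hθ : θ ∈ Ioo (-1) 1) :
    HasDerivAt (fun t => ∫ θ in (0 : ℝ)..t, timeMapIntegrand b M θ)
      (timeMapIntegrand b M θ) θ := by
  have hcont := continuousOn_timeMapIntegrand hb hM
  exact integral_hasDerivAt_right
    ((hcont.mono (ordConnected_Ioo.uIcc_subset (by norm_num) hθ)).intervalIntegrable)
    (hcont.stronglyMeasurableAtFilter isOpen_Ioo θ hθ)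
    (hcont.continuousAt (isOpen_Ioo.mem_nhds hθ))

end TimeMapIntegrand

def levelTime (κ lam M : ℝ) (u : ℝ → ℝ) (x : ℝ) : ℝ :=
  √(-κ) * ∫ θ in (0 : ℝ)..u x / M, timeMapIntegrand (lam * κ / 2) M θ

theorem levelTime_of_eq_zero {κ lam M x : ℝ} {u : ℝ → ℝ} (h : u x = 0) :
    levelTime κ lam M u x = 0 := by
  simp [levelTime, h]

theorem levelTime_of_eq {κ lam M x : ℝ} {u : ℝ → ℝ} (h : u x = M) (hM : M ≠ 0) :
    levelTime κ lam M u x = Jmap κ lam M := by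
  rw [levelTime, h, div_self hM, Jmap_eq_integral_timeMapIntegrand]

def energy (κ lam : ℝ) (u : ℝ → ℝ) (x : ℝ) : ℝ :=
  -κ⁻¹ * (1 + κ * deriv u x ^ 2) ^ (-(1 / 2) : ℝ) + lam / 2 * u x ^ 2

namespace SolODE

variable {κ lam a b x x₀ : ℝ} {u : ℝ → ℝ}

theorem continuousOn (hu : SolODE κ lam u a b) : ContinuousOn u (Icc a b) :=
  fun x hx => (hu.1 x hx).continuousAt.continuousWithinAt

theorem hasDerivAt_energy (hu : SolODE κ lam u a b) (hκ : κ ≠ 0) (hx : x ∈ Icc a b) :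
    HasDerivAt (energy κ lam u) 0 x := by
  obtain ⟨hdu, hdv, -, hw, hode⟩ := hu
  have hw' : HasDerivAt (fun y => 1 + κ * deriv u y ^ 2)
      (κ * (2 * deriv u x ^ 1 * deriv (deriv u) x)) x :=
    (((hdv x hx).hasDerivAt.pow 2).const_mul κ).const_add 1
  have hE : HasDerivAt (energy κ lam u) _ x :=
    (((Real.hasDerivAt_rpow_const (p := -(1 / 2)) (Or.inl (hw x hx).ne')).comp x hw').const_mul
      (-κ⁻¹)).add (((hdu x hx).hasDerivAt.pow 2).const_mul (lam / 2))
  refine hE.congr_deriv ?_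
  have hpow : (1 + κ * deriv u x ^ 2) ^ (-(1 / 2) - 1 : ℝ) *
      (1 + κ * deriv u x ^ 2) ^ ((3 : ℝ) / 2) = 1 := by
    rw [← Real.rpow_add (hw x hx)]; norm_num
  rw [show deriv (deriv u) x = -(lam * u x * (1 + κ * deriv u x ^ 2) ^ ((3 : ℝ) / 2)) by
    linarith [hode x hx]]
  push_cast
  linear_combination -(lam * u x * deriv u x * κ⁻¹ * κ) * hpow -
    (lam * u x * deriv u x) * inv_mul_cancel₀ hκ

theorem energy_eq (hu : SolODE κ lam u a b) (hκ : κ ≠ 0) (hx : x ∈ Icc a b) :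
    energy κ lam u x = energy κ lam u a :=
  constant_of_has_deriv_right_zero
    (fun _ hy => (hu.hasDerivAt_energy hκ hy).continuousAt.continuousWithinAt)
    (fun _ hy => (hu.hasDerivAt_energy hκ (Ico_subset_Icc_self hy)).hasDerivWithinAt) x hx

theorem rpow_eq_of_deriv_eq_zero (hu : SolODE κ lam u a b) (hκ : κ ≠ 0) (hx : x ∈ Icc a b)
    (hx₀ : x₀ ∈ Icc a b) (hv₀ : deriv u x₀ = 0) :
    (1 + κ * deriv u x ^ 2) ^ (-(1 / 2) : ℝ) = 1 - lam * κ / 2 * (u x₀ ^ 2 - u x ^ 2) := by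
  have h := (hu.energy_eq hκ hx).trans (hu.energy_eq hκ hx₀).symm
  simp only [energy, hv₀] at h
  norm_num at h
  field_simp at h
  linear_combination (-1 / 2) * h

theorem sq_le_sq_of_deriv_eq_zero (hu : SolODE κ lam u a b) (hκ : κ < 0) (hlam : 0 < lam)
    (hx : x ∈ Icc a b) (hx₀ : x₀ ∈ Icc a b) (hv₀ : deriv u x₀ = 0) :
    u x ^ 2 ≤ u x₀ ^ 2 := by
  have h1 : 1 ≤ (1 + κ * deriv u x ^ 2) ^ (-(1 / 2) : ℝ) :=
    Real.one_le_rpow_of_pos_of_le_one_of_nonpos (hu.2.2.2.1 x hx)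
      (by nlinarith [sq_nonneg (deriv u x)]) (by norm_num)
  rw [hu.rpow_eq_of_deriv_eq_zero hκ.ne hx hx₀ hv₀] at h1
  nlinarith [mul_pos hlam (neg_pos.2 hκ)]

theorem sq_lt_sq_of_deriv_eq_zero (hu : SolODE κ lam u a b) (hκ : κ < 0) (hlam : 0 < lam)
    (hx : x ∈ Icc a b) (hx₀ : x₀ ∈ Icc a b) (hv₀ : deriv u x₀ = 0) (hv : deriv u x ≠ 0) :
    u x ^ 2 < u x₀ ^ 2 := by
  have h1 : 1 < (1 + κ * deriv u x ^ 2) ^ (-(1 / 2) : ℝ) :=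
    Real.one_lt_rpow_of_pos_of_lt_one_of_neg (hu.2.2.2.1 x hx)
      (by nlinarith [pow_pos (abs_pos.2 hv) 2, sq_abs (deriv u x)]) (by norm_num)
  rw [hu.rpow_eq_of_deriv_eq_zero hκ.ne hx hx₀ hv₀] at h1
  nlinarith [mul_pos hlam (neg_pos.2 hκ)]

theorem strictAntiOn_deriv (hu : SolODE κ lam u a b) (hlam : 0 < lam)
    (hpos : ∀ x ∈ Ioo a b, 0 < u x) : StrictAntiOn (deriv u) (Icc a b) := by
  refine strictAntiOn_of_deriv_neg (convex_Icc a b)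
    (fun x hx => (hu.2.1 x hx).continuousAt.continuousWithinAt) fun x hx => ?_
  rw [interior_Icc] at hx
  have hx' := Ioo_subset_Icc_self hx
  have : 0 < lam * u x * (1 + κ * deriv u x ^ 2) ^ ((3 : ℝ) / 2) :=
    mul_pos (mul_pos hlam (hpos x hx)) (Real.rpow_pos_of_pos (hu.2.2.2.1 x hx') _)
  linarith [hu.2.2.2.2 x hx']

theorem sqrt_mul_timeMapIntegrand (hu : SolODE κ lam u a b) (hκ : κ < 0) (hx : x ∈ Icc a b)
    (hx₀ : x₀ ∈ Icc a b) (hv₀ : deriv u x₀ = 0) (hM : u x₀ ≠ 0) :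
    √(-κ) * timeMapIntegrand (lam * κ / 2) (u x₀) (u x / u x₀) = u x₀ / |deriv u x| := by
  have hw := hu.2.2.2.1 x hx
  have hlevel : 1 - lam * κ / 2 * u x₀ ^ 2 * (1 - (u x / u x₀) ^ 2) =
      (1 + κ * deriv u x ^ 2) ^ (-(1 / 2) : ℝ) := by
    rw [hu.rpow_eq_of_deriv_eq_zero hκ.ne hx hx₀ hv₀]
    field_simp
  have hinv : (((1 + κ * deriv u x ^ 2) ^ (-(1 / 2) : ℝ))⁻¹) ^ 2 = 1 + κ * deriv u x ^ 2 := by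
    rw [← Real.rpow_neg hw.le, neg_neg, ← Real.sqrt_eq_rpow, Real.sq_sqrt hw.le]
  have hsqrt : 0 < √(-κ) := Real.sqrt_pos.2 (neg_pos.2 hκ)
  rw [timeMapIntegrand, hlevel, hinv,
    show 1 - (1 + κ * deriv u x ^ 2) = -κ * deriv u x ^ 2 by ring,
    Real.sqrt_mul (neg_nonneg.2 hκ.le), Real.sqrt_sq_eq_abs, ← mul_div_assoc,
    mul_div_mul_left _ _ hsqrt.ne']

theorem hasDerivAt_levelTime (hu : SolODE κ lam u a b) (hκ : κ < 0) (hlam : 0 < lam)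
    (hx₀ : x₀ ∈ Icc a b) (hv₀ : deriv u x₀ = 0) (hM : 0 < u x₀) (hx : x ∈ Icc a b)
    (hux : 0 ≤ u x) (hv : deriv u x ≠ 0) :
    HasDerivAt (levelTime κ lam (u x₀) u) (deriv u x / |deriv u x|) x := by
  have hlt : u x < u x₀ := (pow_lt_pow_iff_left₀ hux hM.le two_ne_zero).1
    (hu.sq_lt_sq_of_deriv_eq_zero hκ hlam hx hx₀ hv₀ hv)
  have hθ : u x / u x₀ ∈ Ioo (-1) 1 :=
    ⟨by linarith [div_nonneg hux hM.le], (div_lt_one hM).2 hlt⟩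
  have hb : lam * κ / 2 < 0 := by nlinarith
  refine (((hasDerivAt_primitive_timeMapIntegrand hb hM.ne' hθ).comp x
    ((hu.1 x hx).hasDerivAt.div_const (u x₀))).const_mul (√(-κ))).congr_deriv ?_
  rw [← mul_assoc, hu.sqrt_mul_timeMapIntegrand hκ hx hx₀ hv₀ hM.ne']
  field_simp

theorem continuousOn_levelTime (hu : SolODE κ lam u a b) (hκ : κ < 0) (hlam : 0 < lam)
    (hx₀ : x₀ ∈ Icc a b) (hv₀ : deriv u x₀ = 0) (hM : 0 < u x₀)
    (hnonneg : ∀ x ∈ Icc a b, 0 ≤ u x) :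
    ContinuousOn (levelTime κ lam (u x₀) u) (Icc a b) := by
  have hb : lam * κ / 2 < 0 := by nlinarith
  refine continuousOn_const.mul ((continuousOn_primitive_timeMapIntegrand hb hM).comp
    (hu.continuousOn.div_const _) fun x hx => ⟨div_nonneg (hnonneg x hx) hM.le, ?_⟩)
  exact (div_le_one hM).2 ((pow_le_pow_iff_left₀ (hnonneg x hx) hM.le two_ne_zero).1
    (hu.sq_le_sq_of_deriv_eq_zero hκ hlam hx hx₀ hv₀))

end SolODE

theorem stmt17 (κ lam : ℝ) (hκ : κ < 0) (hlam : 0 < lam) (u : ℝ → ℝ)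
    (hu : SolP κ lam u) (hpos : ∀ x ∈ Set.Ioo (0 : ℝ) 1, 0 < u x) :
    Jmap κ lam (u (1 / 2)) = 1 / 2 := by
  obtain ⟨hsol, hu0, hu1⟩ := hu
  have hnonneg := nonneg_on_Icc_of_pos_on_Ioo hu0.ge hu1.ge hpos
  obtain ⟨x₀, hx₀, hv₀⟩ := exists_deriv_eq_zero one_pos hsol.continuousOn (hu0.trans hu1.symm)
  have hx₀' := Ioo_subset_Icc_self hx₀
  have hM := hpos x₀ hx₀
  have hT := hsol.continuousOn_levelTime hκ hlam hx₀' hv₀ hM hnonneg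
  have hderiv {x} (hx : x ∈ Ioo 0 1) (hv : deriv u x ≠ 0) :=
    hsol.hasDerivAt_levelTime hκ hlam hx₀' hv₀ hM (Ioo_subset_Icc_self hx) (hpos x hx).le hv
  have hanti := hsol.strictAntiOn_deriv hlam hpos
  have hleft := sub_eq_mul_sub_of_hasDerivAt_const (c := 1) hx₀.1.le
    (hT.mono (Icc_subset_Icc_right hx₀.2.le)) fun x hx => by
      have hv : 0 < deriv u x := hv₀ ▸ hanti ⟨hx.1.le, by linarith [hx.2, hx₀.2]⟩ hx₀' hx.2
      simpa [abs_of_pos hv, hv.ne'] using hderiv ⟨hx.1, hx.2.trans hx₀.2⟩ hv.ne'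
  have hright := sub_eq_mul_sub_of_hasDerivAt_const (c := -1) hx₀.2.le
    (hT.mono (Icc_subset_Icc_left hx₀.1.le)) fun x hx => by
      have hv : deriv u x < 0 := hv₀ ▸ hanti hx₀' ⟨by linarith [hx.1, hx₀.1], hx.2.le⟩ hx.1
      simpa [abs_of_neg hv, hv.ne] using hderiv ⟨hx₀.1.trans hx.1, hx.2⟩ hv.ne
  rw [levelTime_of_eq_zero hu0, levelTime_of_eq rfl hM.ne'] at hleft
  rw [levelTime_of_eq_zero hu1, levelTime_of_eq rfl hM.ne'] at hright
  obtain rfl : x₀ = 1 / 2 := by linarith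
  linarith
end
end

section
/- Let κ < 0 and fix ξ > 0. Then the function λ ↦ J(λ, ξ) is strictly decreasing on (0, ∞): for all 0 < λ₁ < λ₂ one has J(λ₂, ξ) < J(λ₁, ξ). Moreover, J(λ, ξ) → ∞ as λ → 0⁺. -/
open Set Real Filter

noncomputable section

/-!
Put `b = -λκξ²/2 > 0`. Then `J(λ, ξ) = √(-κ) ξ ∫₀¹ K(b (1 - θ²)) dθ` with
`K(s) = (1 - (1 + s)⁻²)^(-1/2) = (1 + s) / √(s (2 + s))`. The kernel `K` is strictly decreasing
on `(0, ∞)` and tends to `∞` at `0⁺`, so the integral is strictly decreasing in `b` and bounded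
below by `K(b)`, which blows up as `λ → 0⁺`. The integral is finite because
`K(s) ≤ (1 + s) / √(2 s)` and `b (1 - θ²) ≥ b (1 - θ)`, so `(1 - θ)^(-1/2)` is a majorant up to
a constant.
-/

open MeasureTheory Topology

def timeMapKernel (s : ℝ) : ℝ := (√(1 - ((1 + s)⁻¹) ^ 2))⁻¹

lemma one_sub_inv_one_add_sq {s : ℝ} (hs : 1 + s ≠ 0) :
    1 - ((1 + s)⁻¹) ^ 2 = s * (2 + s) / (1 + s) ^ 2 := by
  field_simp
  ring

lemma timeMapKernel_eq {s : ℝ} (hs : 0 ≤ s) : timeMapKernel s = (1 + s) / √(s * (2 + s)) := by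
  rw [timeMapKernel, one_sub_inv_one_add_sq (by positivity), sqrt_div' _ (by positivity),
    sqrt_sq (by positivity), inv_div]

lemma measurable_timeMapKernel : Measurable timeMapKernel := by
  unfold timeMapKernel
  fun_prop

lemma timeMapKernel_strictAntiOn : StrictAntiOn timeMapKernel (Ioi 0) := by
  intro s (hs : 0 < s) t (ht : 0 < t) hst
  have hpos : 0 < 1 - ((1 + s)⁻¹) ^ 2 := by
    rw [one_sub_inv_one_add_sq (by positivity)]
    positivity
  refine inv_strictAnti₀ (sqrt_pos.2 hpos) (sqrt_lt_sqrt hpos.le ?_)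
  have : (1 + t)⁻¹ < (1 + s)⁻¹ := inv_strictAnti₀ (by positivity) (by linarith)
  gcongr 1 - ?_
  exact pow_lt_pow_left₀ this (by positivity) two_ne_zero

lemma timeMapKernel_le {s : ℝ} (hs : 0 < s) : timeMapKernel s ≤ (1 + s) / √(2 * s) := by
  rw [timeMapKernel_eq hs.le]
  exact div_le_div_of_nonneg_left (by positivity) (by positivity) (sqrt_le_sqrt (by nlinarith))

lemma tendsto_timeMapKernel_nhdsGT_zero : Tendsto timeMapKernel (𝓝[>] 0) atTop := by
  refine Tendsto.inv_tendsto_nhdsGT_zero (tendsto_nhdsWithin_iff.2 ⟨?_, ?_⟩)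
  · have hcont : ContinuousAt (fun s : ℝ => √(1 - ((1 + s)⁻¹) ^ 2)) 0 := by
      fun_prop (disch := norm_num)
    simpa using hcont.tendsto.mono_left nhdsWithin_le_nhds
  · filter_upwards [self_mem_nhdsWithin] with s (hs : 0 < s)
    rw [mem_Ioi, one_sub_inv_one_add_sq (by positivity)]
    positivity

lemma intervalIntegrable_inv_sqrt_one_sub :
    IntervalIntegrable (fun θ : ℝ => (√(1 - θ))⁻¹) volume 0 1 := by
  have h : IntervalIntegrable (fun θ : ℝ => (1 - θ) ^ (-(1 / 2) : ℝ)) volume 0 1 := by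
    simpa using ((intervalIntegral.intervalIntegrable_rpow' (r := -(1 / 2)) (by norm_num)
      (a := 0) (b := 1)).comp_sub_left 1).symm
  refine h.congr fun θ hθ => ?_
  rw [uIoc_of_le zero_le_one] at hθ
  rw [sqrt_eq_rpow, rpow_neg (by linarith [hθ.2])]

lemma intervalIntegrable_timeMapKernel {b : ℝ} (hb : 0 < b) :
    IntervalIntegrable (fun θ => timeMapKernel (b * (1 - θ ^ 2))) volume 0 1 := by
  refine (intervalIntegrable_inv_sqrt_one_sub.const_mul ((1 + b) / √(2 * b))).mono_fun
    (measurable_timeMapKernel.comp (by fun_prop)).aestronglyMeasurable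
    ((ae_restrict_mem measurableSet_uIoc).mono fun θ hθ => ?_)
  rw [uIoc_of_le zero_le_one] at hθ
  obtain ⟨hθ₀, hθ₁⟩ := hθ
  rcases hθ₁.eq_or_lt with rfl | hθ₁
  · -- at `θ = 1` the kernel takes the junk value `(√0)⁻¹ = 0`
    simp [timeMapKernel]
  have hlow : b * (1 - θ) ≤ b * (1 - θ ^ 2) := by
    nlinarith [mul_pos hb hθ₀, mul_pos hθ₀ (sub_pos.2 hθ₁)]
  have hup : b * (1 - θ ^ 2) ≤ b := by nlinarith
  have hpos : 0 < b * (1 - θ) := mul_pos hb (by linarith)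
  have hK : 0 ≤ timeMapKernel (b * (1 - θ ^ 2)) := by unfold timeMapKernel; positivity
  dsimp only
  rw [norm_of_nonneg hK, norm_of_nonneg (by positivity)]
  calc timeMapKernel (b * (1 - θ ^ 2)) ≤ (1 + b * (1 - θ ^ 2)) / √(2 * (b * (1 - θ ^ 2))) :=
        timeMapKernel_le (hpos.trans_le hlow)
    _ ≤ (1 + b) / √(2 * (b * (1 - θ))) := by gcongr
    _ = (1 + b) / √(2 * b) * (√(1 - θ))⁻¹ := by
        rw [← mul_assoc, sqrt_mul (by positivity), div_mul_eq_div_div, div_eq_mul_inv _ √(1 - θ)]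

def timeIntegral (b : ℝ) : ℝ := ∫ θ in (0 : ℝ)..1, timeMapKernel (b * (1 - θ ^ 2))

lemma timeIntegral_strictAntiOn : StrictAntiOn timeIntegral (Ioi 0) := by
  intro b₁ (hb₁ : 0 < b₁) b₂ (hb₂ : 0 < b₂) hb
  have hθ : ∀ θ ∈ Ioo (0 : ℝ) 1, 0 < 1 - θ ^ 2 := fun θ hθ => by nlinarith [hθ.1, hθ.2]
  have hlt : 0 < ∫ θ in (0 : ℝ)..1,
      (timeMapKernel (b₁ * (1 - θ ^ 2)) - timeMapKernel (b₂ * (1 - θ ^ 2))) :=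
    intervalIntegral.intervalIntegral_pos_of_pos_on
      ((intervalIntegrable_timeMapKernel hb₁).sub (intervalIntegrable_timeMapKernel hb₂))
      (fun θ h => sub_pos.2 <| timeMapKernel_strictAntiOn (mul_pos hb₁ (hθ θ h))
        (mul_pos hb₂ (hθ θ h)) (mul_lt_mul_of_pos_right hb (hθ θ h)))
      zero_lt_one
  rwa [intervalIntegral.integral_sub (intervalIntegrable_timeMapKernel hb₁)
    (intervalIntegrable_timeMapKernel hb₂), sub_pos] at hlt

lemma timeMapKernel_le_timeIntegral {b : ℝ} (hb : 0 < b) : timeMapKernel b ≤ timeIntegral b := by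
  calc timeMapKernel b = ∫ _ in (0 : ℝ)..1, timeMapKernel b := by simp
    _ ≤ timeIntegral b :=
      intervalIntegral.integral_mono_on_of_le_Ioo zero_le_one intervalIntegrable_const
        (intervalIntegrable_timeMapKernel hb) fun θ ⟨hθ₀, hθ₁⟩ =>
          timeMapKernel_strictAntiOn.antitoneOn (mul_pos hb (by nlinarith)) hb
            (mul_le_of_le_one_right hb.le (by nlinarith))

lemma tendsto_timeIntegral_nhdsGT_zero : Tendsto timeIntegral (𝓝[>] 0) atTop :=
  tendsto_atTop_mono' _ (eventually_mem_nhdsWithin.mono fun _ => timeMapKernel_le_timeIntegral)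
    tendsto_timeMapKernel_nhdsGT_zero

lemma Jmap_eq_timeIntegral (κ lam ξ : ℝ) :
    Jmap κ lam ξ = √(-κ) * ξ * timeIntegral (-κ * ξ ^ 2 / 2 * lam) := by
  rw [Jmap, timeIntegral, mul_assoc, ← intervalIntegral.integral_const_mul ξ]
  congr 1
  refine intervalIntegral.integral_congr fun θ _ => ?_
  rw [timeMapKernel, div_eq_mul_inv]
  ring_nf

theorem stmt18 (κ ξ : ℝ) (hκ : κ < 0) (hξ : 0 < ξ) :
    (∀ lam₁ lam₂ : ℝ, 0 < lam₁ → lam₁ < lam₂ → Jmap κ lam₂ ξ < Jmap κ lam₁ ξ) ∧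
    Filter.Tendsto (fun lam => Jmap κ lam ξ) (nhdsWithin 0 (Set.Ioi 0)) Filter.atTop := by
  have hc : 0 < -κ * ξ ^ 2 / 2 := by have := neg_pos.2 hκ; positivity
  have hpre : 0 < √(-κ) * ξ := mul_pos (sqrt_pos.2 (neg_pos.2 hκ)) hξ
  simp only [Jmap_eq_timeIntegral]
  refine ⟨fun lam₁ lam₂ h₁ h₁₂ => ?_, ?_⟩
  · have h₂ : 0 < lam₂ := h₁.trans h₁₂
    exact mul_lt_mul_of_pos_left (timeIntegral_strictAntiOn (mul_pos hc h₁) (mul_pos hc h₂)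
      (mul_lt_mul_of_pos_left h₁₂ hc)) hpre
  · have hscale : Tendsto (fun lam => -κ * ξ ^ 2 / 2 * lam) (𝓝[>] 0) (𝓝[>] 0) :=
      tendsto_iff_comap.2 (comap_mulLeft_nhdsGT_zero hc).ge
    exact (tendsto_timeIntegral_nhdsGT_zero.comp hscale).const_mul_atTop hpre
end
end

section
/- Let κ < 0 and fix λ > 0. Then the function ξ ↦ J(λ, ξ) is strictly increasing on (0, ∞): for all 0 < ξ₁ < ξ₂ one has J(λ, ξ₁) < J(λ, ξ₂). -/
open Set Real Filter

noncomputable section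

/-- The integrand of `Jmap`. -/
def gInt (c ξ θ : ℝ) : ℝ :=
  ξ / Real.sqrt (1 - ((1 - c * ξ ^ 2 * (1 - θ ^ 2))⁻¹) ^ 2)

lemma one_lt_h {c ξ θ : ℝ} (hc : c < 0) (hξ : 0 < ξ) (hθ0 : 0 ≤ θ) (hθ1 : θ < 1) :
    (1 : ℝ) < 1 - c * ξ ^ 2 * (1 - θ ^ 2) := by
  have h2 : (0:ℝ) < 1 - θ ^ 2 := by nlinarith
  nlinarith [mul_pos (mul_pos (neg_pos.mpr hc) (pow_pos hξ 2)) h2]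

lemma D_pos {c ξ θ : ℝ} (hc : c < 0) (hξ : 0 < ξ) (hθ0 : 0 ≤ θ) (hθ1 : θ < 1) :
    0 < 1 - ((1 - c * ξ ^ 2 * (1 - θ ^ 2))⁻¹) ^ 2 := by
  have h1 := one_lt_h hc hξ hθ0 hθ1
  have hinv : (1 - c * ξ ^ 2 * (1 - θ ^ 2))⁻¹ < 1 := by
    rw [inv_lt_one_iff₀]; right; exact h1
  have hinv0 : 0 < (1 - c * ξ ^ 2 * (1 - θ ^ 2))⁻¹ := by positivity
  nlinarith

lemma gInt_nonneg {c ξ θ : ℝ} (hξ : 0 < ξ) : 0 ≤ gInt c ξ θ :=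
  div_nonneg hξ.le (Real.sqrt_nonneg _)

lemma sq_val (a ξ : ℝ) (ha : 0 < a) (hξ : 0 < ξ) :
    ξ ^ 2 / (1 - ((1 + a * ξ ^ 2)⁻¹) ^ 2) = (1 + a * ξ ^ 2) ^ 2 / (a * (a * ξ ^ 2 + 2)) := by
  have h1 : (0:ℝ) < 1 + a * ξ ^ 2 := by positivity
  have h2 : (0:ℝ) < a * (a * ξ ^ 2 + 2) := by positivity
  have hD : 1 - ((1 + a * ξ ^ 2)⁻¹) ^ 2 = a * ξ ^ 2 * (a * ξ ^ 2 + 2) / (1 + a * ξ ^ 2) ^ 2 := by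
    field_simp
    ring
  rw [hD, div_div_eq_mul_div, div_eq_div_iff (by positivity) h2.ne']
  ring

lemma gInt_sq {c ξ θ : ℝ} (hc : c < 0) (hξ : 0 < ξ) (hθ0 : 0 ≤ θ) (hθ1 : θ < 1) :
    gInt c ξ θ ^ 2 = (1 + (-c * (1 - θ ^ 2)) * ξ ^ 2) ^ 2
      / ((-c * (1 - θ ^ 2)) * ((-c * (1 - θ ^ 2)) * ξ ^ 2 + 2)) := by
  have ha0 : 0 < -c * (1 - θ ^ 2) := by apply mul_pos (by linarith); nlinarith
  have hD := D_pos hc hξ hθ0 hθ1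
  have hh : 1 - c * ξ ^ 2 * (1 - θ ^ 2) = 1 + -c * (1 - θ ^ 2) * ξ ^ 2 := by ring
  rw [gInt, div_pow, Real.sq_sqrt hD.le, hh, sq_val _ _ ha0 hξ]

lemma key_ineq (a u v : ℝ) (ha : 0 < a) (hu : 0 < u) (huv : u < v) :
    (1 + u) ^ 2 / (a * (u + 2)) < (1 + v) ^ 2 / (a * (v + 2)) := by
  rw [div_lt_div_iff₀ (mul_pos ha (by linarith)) (mul_pos ha (by linarith))]
  have h : (1 + u) ^ 2 * (v + 2) < (1 + v) ^ 2 * (u + 2) := by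
    nlinarith [mul_pos (sub_pos.mpr huv) (mul_pos hu (hu.trans huv))]
  calc (1 + u) ^ 2 * (a * (v + 2)) = a * ((1 + u) ^ 2 * (v + 2)) := by ring
    _ < a * ((1 + v) ^ 2 * (u + 2)) := (mul_lt_mul_iff_right₀ ha).mpr h
    _ = (1 + v) ^ 2 * (a * (u + 2)) := by ring

lemma gInt_lt {c ξ₁ ξ₂ θ : ℝ} (hc : c < 0) (h1 : 0 < ξ₁) (h12 : ξ₁ < ξ₂)
    (hθ0 : 0 ≤ θ) (hθ1 : θ < 1) : gInt c ξ₁ θ < gInt c ξ₂ θ := by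
  have h2 : 0 < ξ₂ := h1.trans h12
  have ha0 : 0 < -c * (1 - θ ^ 2) := by apply mul_pos (by linarith); nlinarith
  have hsq : gInt c ξ₁ θ ^ 2 < gInt c ξ₂ θ ^ 2 := by
    rw [gInt_sq hc h1 hθ0 hθ1, gInt_sq hc h2 hθ0 hθ1]
    exact key_ineq _ _ _ ha0 (by positivity)
      (mul_lt_mul_of_pos_left (by nlinarith) ha0)
  exact lt_of_pow_lt_pow_left₀ 2 (gInt_nonneg h2) hsq

lemma D_eq (s : ℝ) (h : 0 < 1 + s) : 1 - ((1 + s)⁻¹) ^ 2 = s * (s + 2) / (1 + s) ^ 2 := by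
  field_simp
  ring

lemma gInt_integrable {c ξ : ℝ} (hc : c < 0) (hξ : 0 < ξ) :
    IntervalIntegrable (gInt c ξ) MeasureTheory.volume 0 1 := by
  have hm0 : 0 < -c * ξ ^ 2 := mul_pos (neg_pos.mpr hc) (pow_pos hξ 2)
  set m : ℝ := -c * ξ ^ 2 with hm
  clear_value m
  set K : ℝ := 2 * m / (1 + m) ^ 2 with hK
  have hK0 : 0 < K := by positivity
  clear_value K
  have hb : IntervalIntegrable
      (fun θ : ℝ => ξ / Real.sqrt K * (1 - θ) ^ (-(1 / 2) : ℝ)) MeasureTheory.volume 0 1 := by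
    have h1 : IntervalIntegrable (fun x : ℝ => x ^ (-(1 / 2) : ℝ)) MeasureTheory.volume 1 0 :=
      (intervalIntegral.intervalIntegrable_rpow' (by norm_num)).symm
    have h2 := (h1.comp_sub_left 1).const_mul (ξ / Real.sqrt K)
    norm_num at h2
    exact h2
  apply IntervalIntegrable.mono_fun' hb
  · apply Measurable.aestronglyMeasurable
    apply Measurable.div measurable_const
    apply Real.continuous_sqrt.measurable.comp
    apply Measurable.sub measurable_const
    apply Measurable.pow _ measurable_const
    apply Measurable.inv
    apply Measurable.sub measurable_const
    exact (measurable_const.mul ((measurable_const.sub (measurable_id.pow_const 2))))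
  · rw [Filter.EventuallyLE, MeasureTheory.ae_restrict_iff' measurableSet_uIoc]
    refine MeasureTheory.ae_of_all _ fun θ hθ => ?_
    rw [Set.uIoc_of_le (by norm_num : (0:ℝ) ≤ 1)] at hθ
    have hθ0 : 0 < θ := hθ.1
    have hθ1 : θ ≤ 1 := hθ.2
    have hnorm : ‖gInt c ξ θ‖ = gInt c ξ θ := by
      rw [Real.norm_eq_abs, abs_of_nonneg (gInt_nonneg hξ)]
    rw [hnorm]
    rcases eq_or_lt_of_le hθ1 with heq | hlt
    · subst heq
      have : gInt c ξ 1 = 0 := by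
        unfold gInt; norm_num
      rw [this]
      have : ((1:ℝ) - 1) ^ (-(1 / 2) : ℝ) = 0 := by
        norm_num
      rw [this, mul_zero]
    · -- main case θ ∈ (0,1)
      set s : ℝ := m * (1 - θ ^ 2) with hs
      have hs0 : 0 < s := by
        apply mul_pos hm0; nlinarith
      have hsm : s ≤ m := by nlinarith
      have hslow : m * (1 - θ) ≤ s := by rw [hs]; nlinarith
      have hh : 1 - c * ξ ^ 2 * (1 - θ ^ 2) = 1 + s := by rw [hs, hm]; ring
      have h1s : (0:ℝ) < 1 + s := by linarith
      have hDlow : K * (1 - θ) ≤ 1 - ((1 - c * ξ ^ 2 * (1 - θ ^ 2))⁻¹) ^ 2 := by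
        rw [hh, D_eq s h1s, le_div_iff₀ (by positivity)]
        rw [hK, div_mul_eq_mul_div, div_mul_eq_mul_div, div_le_iff₀ (by positivity)]
        have hA : 2 * m * (1 - θ) * (1 + s) ^ 2 ≤ 2 * s * (1 + s) ^ 2 := by nlinarith [sq_nonneg (1 + s)]
        have hB : (1 + s) ^ 2 ≤ (1 + m) ^ 2 := by nlinarith
        have hC : 2 * s * (1 + s) ^ 2 ≤ 2 * s * (1 + m) ^ 2 := by nlinarith
        have hD : 2 * s * (1 + m) ^ 2 ≤ s * (s + 2) * (1 + m) ^ 2 := by nlinarith [mul_nonneg (sq_nonneg s) (sq_nonneg (1 + m))]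
        nlinarith
      have h1θ : (0:ℝ) < 1 - θ := by linarith
      have hsq2 : 0 < Real.sqrt (K * (1 - θ)) := Real.sqrt_pos.mpr (by positivity)
      have hstep : gInt c ξ θ ≤ ξ / Real.sqrt (K * (1 - θ)) := by
        unfold gInt
        gcongr
      refine hstep.trans (le_of_eq ?_)
      rw [Real.sqrt_mul hK0.le, Real.rpow_neg h1θ.le, ← Real.sqrt_eq_rpow]
      field_simp

theorem stmt19' (κ lam : ℝ) (hκ : κ < 0) (hlam : 0 < lam) :
    ∀ ξ₁ ξ₂ : ℝ, 0 < ξ₁ → ξ₁ < ξ₂ →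
      Real.sqrt (-κ) * (∫ θ in (0:ℝ)..1, gInt (lam * κ / 2) ξ₁ θ)
        < Real.sqrt (-κ) * (∫ θ in (0:ℝ)..1, gInt (lam * κ / 2) ξ₂ θ) := by
  intro ξ₁ ξ₂ h1 h12
  have h2 : 0 < ξ₂ := h1.trans h12
  have hc : lam * κ / 2 < 0 := by
    have := mul_neg_of_pos_of_neg hlam hκ
    linarith
  have hκ' : 0 < Real.sqrt (-κ) := Real.sqrt_pos.mpr (by linarith)
  apply mul_lt_mul_of_pos_left _ hκ'
  have I1 := gInt_integrable hc h1
  have I2 := gInt_integrable hc h2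
  have hsub : 0 < ∫ θ in (0:ℝ)..1, (gInt (lam * κ / 2) ξ₂ θ - gInt (lam * κ / 2) ξ₁ θ) := by
    apply intervalIntegral.intervalIntegral_pos_of_pos_on (I2.sub I1)
    · intro x hx
      have := gInt_lt hc h1 h12 hx.1.le hx.2
      linarith
    · norm_num
  rw [intervalIntegral.integral_sub I2 I1] at hsub
  linarith

theorem stmt19 (κ lam : ℝ) (hκ : κ < 0) (hlam : 0 < lam) :
    ∀ ξ₁ ξ₂ : ℝ, 0 < ξ₁ → ξ₁ < ξ₂ → Jmap κ lam ξ₁ < Jmap κ lam ξ₂ := by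
  intro ξ₁ ξ₂ h1 h12
  exact stmt19' κ lam hκ hlam ξ₁ ξ₂ h1 h12
end
end
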